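/- Let n, m, l be natural numbers with n + m + l even, and set P₁ := n² + m² + l² − 2nm − 2nl − 2ml. Then I_{n,m,l,2} = (n+m−l−3)‼ · (n−m+l−3)‼ · (−n+m+l−3)‼ · ((P₁ − 1)² − 16·n·m·l), where the three double-factorial arguments are odd integers (possibly negative) and ‼ denotes the extended double factorial. -/

import Mathlib

/-!
Differentiating `H_n H_m H_l e^{-2x²}` with `H_n' = 2n H_{n-1}` and
`2x H_n = H_{n+1} + 2n H_{n-1}`, and integrating over `ℝ`, gives a three-term recursion in `n`
for `∫ H_n H_m H_l e^{-2x²}`. The expression `√(π/2) (n+m-l-1)‼ (n-m+l-1)‼ (-n+m+l-1)‼`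
(and `0` for odd `n+m+l`) obeys the same recursion, the same symmetries and the same initial
value `∫ e^{-2x²} = √(π/2)`, so it is the integral. Linearizing
`H_2 H_l = H_{l+2} + 4l H_l + 4l(l-1) H_{l-2}` turns `I_{n,m,l,2}` into three such integrals,
and `(a+2)‼ = (a+2) a‼` collects them over the common factor
`(n+m-l-3)‼ (n-m+l-3)‼ (-n+m+l-3)‼`.
-/

open MeasureTheory Real

/-- Physicists' Hermite polynomials: `H 0 x = 1`, `H 1 x = 2x`,
`H (n+1) x = 2x * H n x - 2n * H (n-1) x`. -/
noncomputable def hermiteP : ℕ → ℝ → ℝ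
  | 0, _ => 1
  | 1, x => 2 * x
  | n + 2, x => 2 * x * hermiteP (n + 1) x - 2 * ((n : ℝ) + 1) * hermiteP n x

/-- Extended double factorial of an odd integer `a`:
`a‼ = 2^((a+1)/2) * Γ(a/2 + 1) / √π`. -/
noncomputable def ddfact (a : ℤ) : ℝ :=
  (2 : ℝ) ^ ((a + 1) / 2) * Real.Gamma ((a : ℝ) / 2 + 1) / Real.sqrt π

/-- `I n m l k = √(2/π) ∫ H_n(x) H_m(x) H_l(x) H_k(x) e^{-2x²} dx`. -/
noncomputable def I (n m l k : ℕ) : ℝ :=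
  Real.sqrt (2 / π) *
    ∫ x : ℝ,
      hermiteP n x * hermiteP m x * hermiteP l x * hermiteP k x * Real.exp (-2 * x ^ 2)

open Polynomial

lemma ddfact_add_two {a : ℤ} (ha : Odd a) : ddfact (a + 2) = (a + 2) * ddfact a := by
  obtain ⟨k, rfl⟩ := ha
  have hΓ : ((2 * k + 1 : ℤ) : ℝ) / 2 + 1 ≠ 0 := by
    rw [show ((2 * k + 1 : ℤ) : ℝ) / 2 + 1 = ((2 * k + 3 : ℤ) : ℝ) / 2 by push_cast; ring]
    exact div_ne_zero (by exact_mod_cast (by omega : 2 * k + 3 ≠ 0)) two_ne_zero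
  have hpow : (2 * k + 1 + 2 + 1) / 2 = (2 * k + 1 + 1) / 2 + 1 := by omega
  have harg : ((2 * k + 1 + 2 : ℤ) : ℝ) / 2 + 1 = (((2 * k + 1 : ℤ) : ℝ) / 2 + 1) + 1 := by
    push_cast; ring
  unfold ddfact
  rw [hpow, harg, Real.Gamma_add_one hΓ, zpow_add_one₀ two_ne_zero]
  push_cast
  ring

lemma ddfact_neg_one : ddfact (-1) = 1 := by
  have : Real.sqrt π ≠ 0 := by positivity
  norm_num [ddfact]
  rw [Real.Gamma_one_half_eq, div_self this]

lemma two_mul_mul_hermiteP (n : ℕ) (x : ℝ) :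
    2 * x * hermiteP n x = hermiteP (n + 1) x + 2 * n * hermiteP (n - 1) x := by
  cases n with
  | zero => simp [hermiteP]
  | succ k => simp only [hermiteP, Nat.add_sub_cancel]; push_cast; ring

lemma hermiteP_two_mul_hermiteP (l : ℕ) (x : ℝ) :
    hermiteP 2 x * hermiteP l x =
      hermiteP (l + 2) x + 4 * l * hermiteP l x + 4 * l * (l - 1) * hermiteP (l - 2) x := by
  have hH2 : hermiteP 2 x = 4 * x ^ 2 - 2 := by simp only [hermiteP]; push_cast; ring
  rcases l with _ | k
  · simp [hermiteP]
  have e0 := two_mul_mul_hermiteP k x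
  have e1 := two_mul_mul_hermiteP (k + 1) x
  have e2 := two_mul_mul_hermiteP (k + 2) x
  simp only [Nat.add_sub_cancel, show k + 1 + 1 = k + 2 from rfl,
    show k + 1 + 2 = k + 3 from rfl,
    show k + 1 - 2 = k - 1 by omega] at *
  push_cast at *
  linear_combination hermiteP (k + 1) x * hH2 + 2 * x * e1 + e2 + 2 * ((k : ℝ) + 1) * e0

theorem hasDerivAt_hermiteP :
    ∀ (n : ℕ) (x : ℝ), HasDerivAt (hermiteP n) (2 * n * hermiteP (n - 1) x) x
  | 0, x => by simpa [hermiteP] using hasDerivAt_const x (1 : ℝ)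
  | 1, x => by simpa [hermiteP] using (hasDerivAt_id x).const_mul (2 : ℝ)
  | n + 2, x => by
    have H := (((hasDerivAt_id x).const_mul 2).mul (hasDerivAt_hermiteP (n + 1) x)).sub
      ((hasDerivAt_hermiteP n x).const_mul (2 * ((n : ℝ) + 1)))
    have hx := two_mul_mul_hermiteP n x
    refine (H.congr_deriv ?_).congr_of_eventuallyEq (Filter.Eventually.of_forall fun y => rfl)
    simp only [show n + 2 - 1 = n + 1 from rfl, Nat.add_sub_cancel, id_eq, Nat.cast_add,
      Nat.cast_ofNat, Nat.cast_one] at *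
    linear_combination (2 * ((n : ℝ) + 1)) * hx

theorem exists_polynomial_hermiteP_eq_eval :
    ∀ n : ℕ, ∃ p : ℝ[X], ∀ x, hermiteP n x = p.eval x
  | 0 => ⟨1, by simp [hermiteP]⟩
  | 1 => ⟨C 2 * X, by simp [hermiteP]⟩
  | n + 2 => by
    obtain ⟨p, hp⟩ := exists_polynomial_hermiteP_eq_eval (n + 1)
    obtain ⟨q, hq⟩ := exists_polynomial_hermiteP_eq_eval n
    exact ⟨C 2 * X * p - C (2 * ((n : ℝ) + 1)) * q, fun x => by simp [hermiteP, hp, hq]⟩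

lemma integrable_eval_mul_exp_neg_mul_sq (p : ℝ[X]) {b : ℝ} (hb : 0 < b) :
    Integrable fun x : ℝ => p.eval x * Real.exp (-b * x ^ 2) := by
  induction p using Polynomial.induction_on' with
  | add p q hp hq => simpa [add_mul, Pi.add_def] using hp.add hq
  | monomial k c =>
    have h := integrable_rpow_mul_exp_neg_mul_sq hb
      (lt_of_lt_of_le neg_one_lt_zero (Nat.cast_nonneg k))
    simp_rw [Real.rpow_natCast] at h
    simpa [mul_assoc] using h.const_mul c

noncomputable def tripleIntegrand (n m l : ℕ) (x : ℝ) : ℝ :=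
  hermiteP n x * hermiteP m x * hermiteP l x * Real.exp (-2 * x ^ 2)

noncomputable def tripleIntegral (n m l : ℕ) : ℝ :=
  ∫ x, tripleIntegrand n m l x

@[fun_prop]
lemma integrable_tripleIntegrand (n m l : ℕ) : Integrable (tripleIntegrand n m l) := by
  obtain ⟨p, hp⟩ := exists_polynomial_hermiteP_eq_eval n
  obtain ⟨q, hq⟩ := exists_polynomial_hermiteP_eq_eval m
  obtain ⟨r, hr⟩ := exists_polynomial_hermiteP_eq_eval l
  refine (integrable_eval_mul_exp_neg_mul_sq (p * q * r) two_pos).congr (ae_of_all _ fun x => ?_)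
  simp [tripleIntegrand, hp, hq, hr]

lemma hasDerivAt_tripleIntegrand (n m l : ℕ) (x : ℝ) :
    HasDerivAt (tripleIntegrand n m l)
      (2 * m * tripleIntegrand n (m - 1) l x + 2 * l * tripleIntegrand n m (l - 1) x
        - 2 * tripleIntegrand (n + 1) m l x - 2 * n * tripleIntegrand (n - 1) m l x) x := by
  have hgauss : HasDerivAt (fun y : ℝ => Real.exp (-2 * y ^ 2))
      (Real.exp (-2 * x ^ 2) * (-4 * x)) x := by
    have := ((hasDerivAt_pow 2 x).const_mul (-2 : ℝ)).exp
    convert this using 1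
    push_cast
    ring
  have H := (((hasDerivAt_hermiteP n x).mul (hasDerivAt_hermiteP m x)).mul
    (hasDerivAt_hermiteP l x)).mul hgauss
  refine H.congr_deriv ?_
  have hx := two_mul_mul_hermiteP n x
  simp only [tripleIntegrand, Pi.mul_apply]
  linear_combination (-2 * hermiteP m x * hermiteP l x * Real.exp (-2 * x ^ 2)) * hx

lemma tripleIntegral_succ (n m l : ℕ) :
    tripleIntegral (n + 1) m l =
      m * tripleIntegral n (m - 1) l + l * tripleIntegral n m (l - 1)
        - n * tripleIntegral (n - 1) m l := by
  have hzero := integral_eq_zero_of_hasDerivAt_of_integrable (hasDerivAt_tripleIntegrand n m l)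
    (by fun_prop) (integrable_tripleIntegrand n m l)
  rw [integral_sub (by fun_prop) (by fun_prop), integral_sub (by fun_prop) (by fun_prop),
    integral_add (by fun_prop) (by fun_prop)] at hzero
  simp only [integral_const_mul] at hzero
  unfold tripleIntegral
  linarith

lemma tripleIntegral_zero : tripleIntegral 0 0 0 = Real.sqrt (π / 2) := by
  simpa [tripleIntegral, tripleIntegrand, hermiteP] using integral_gaussian 2

lemma tripleIntegral_comm12 (n m l : ℕ) : tripleIntegral n m l = tripleIntegral m n l := by
  simp only [tripleIntegral, tripleIntegrand, mul_comm (hermiteP n _)]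

lemma tripleIntegral_comm13 (n m l : ℕ) : tripleIntegral n m l = tripleIntegral l m n := by
  unfold tripleIntegral tripleIntegrand
  congr 1 with x
  ring

noncomputable def tripleDdfact (a b c : ℤ) : ℝ :=
  if Even (a + b + c) then
    ddfact (a + b - c - 1) * ddfact (a - b + c - 1) * ddfact (-a + b + c - 1)
  else 0

lemma tripleDdfact_succ (a b c : ℤ) :
    tripleDdfact (a + 1) b c =
      b * tripleDdfact a (b - 1) c + c * tripleDdfact a b (c - 1)
        - a * tripleDdfact (a - 1) b c := by
  by_cases hpar : Even (a + 1 + b + c)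
  · have hp := ddfact_add_two (a := a + b - c - 2) (by grind)
    have hq := ddfact_add_two (a := a - b + c - 2) (by grind)
    have hr := ddfact_add_two (a := -a + b + c - 2) (by grind)
    simp only [tripleDdfact, if_pos hpar]
    rw [if_pos (by grind), if_pos (by grind), if_pos (by grind)]
    -- `ring_nf` brings every `ddfact` argument to normal form, so `hp hq hr` rewrite in place.
    ring_nf at hp hq hr ⊢
    rw [hp, hq, hr]
    push_cast
    ring
  · simp only [tripleDdfact, if_neg hpar]
    rw [if_neg (by grind), if_neg (by grind), if_neg (by grind)]
    ring

lemma tripleDdfact_comm12 (a b c : ℤ) : tripleDdfact a b c = tripleDdfact b a c := by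
  simp only [tripleDdfact, show b + a + c = a + b + c by ring,
    show b + a - c - 1 = a + b - c - 1 by ring, show b - a + c - 1 = -a + b + c - 1 by ring,
    show -b + a + c - 1 = a - b + c - 1 by ring]
  split_ifs <;> ring

lemma tripleDdfact_comm13 (a b c : ℤ) : tripleDdfact a b c = tripleDdfact c b a := by
  simp only [tripleDdfact, show c + b + a = a + b + c by ring,
    show c + b - a - 1 = -a + b + c - 1 by ring, show c - b + a - 1 = a - b + c - 1 by ring,
    show -c + b + a - 1 = a + b - c - 1 by ring]
  split_ifs <;> ring

lemma tripleDdfact_zero : tripleDdfact 0 0 0 = 1 := by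
  norm_num [tripleDdfact, ddfact_neg_one]

lemma natCast_mul_natCast_sub_one (m : ℕ) (f : ℤ → ℝ) :
    (m : ℝ) * f ((m - 1 : ℕ) : ℤ) = m * f (m - 1) := by
  cases m <;> simp

lemma tripleDdfact_natCast_succ (n m l : ℕ) :
    tripleDdfact (n + 1 : ℕ) m l =
      m * tripleDdfact n (m - 1 : ℕ) l + l * tripleDdfact n m (l - 1 : ℕ)
        - n * tripleDdfact (n - 1 : ℕ) m l := by
  rw [natCast_mul_natCast_sub_one m (fun t => tripleDdfact n t l),
    natCast_mul_natCast_sub_one l (fun t => tripleDdfact n m t),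
    natCast_mul_natCast_sub_one n (fun t => tripleDdfact t m l), Nat.cast_succ]
  exact tripleDdfact_succ n m l

theorem tripleIntegral_eq (n m l : ℕ) :
    tripleIntegral n m l = Real.sqrt (π / 2) * tripleDdfact n m l := by
  induction h : n + m + l using Nat.strong_induction_on generalizing n m l with
  | _ s ih =>
    have step (n m l : ℕ) (hs : n + 1 + m + l = s) :
        tripleIntegral (n + 1) m l = Real.sqrt (π / 2) * tripleDdfact (n + 1 : ℕ) m l := by
      rw [tripleIntegral_succ, tripleDdfact_natCast_succ, ih _ (by omega) n (m - 1) l rfl,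
        ih _ (by omega) n m (l - 1) rfl, ih _ (by omega) (n - 1) m l rfl]
      ring
    rcases n with _ | n
    · rcases m with _ | m
      · rcases l with _ | l
        · simp [tripleIntegral_zero, tripleDdfact_zero]
        · rw [tripleIntegral_comm13, step l 0 0 (by omega), tripleDdfact_comm13]
      · rw [tripleIntegral_comm12, step m 0 l (by omega), tripleDdfact_comm12]
    · exact step n m l (by omega)

lemma I_two_eq (n m l : ℕ) :
    I n m l 2 = Real.sqrt (2 / π) * (tripleIntegral n m (l + 2) + 4 * l * tripleIntegral n m l
      + 4 * l * (l - 1) * tripleIntegral n m (l - 2)) := by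
  have hlin : (fun x => hermiteP n x * hermiteP m x * hermiteP l x * hermiteP 2 x
      * Real.exp (-2 * x ^ 2)) = fun x => tripleIntegrand n m (l + 2) x
        + 4 * l * tripleIntegrand n m l x + 4 * l * (l - 1) * tripleIntegrand n m (l - 2) x := by
    funext x
    simp only [tripleIntegrand]
    linear_combination (hermiteP n x * hermiteP m x * Real.exp (-2 * x ^ 2))
      * hermiteP_two_mul_hermiteP l x
  rw [I, hlin, integral_add (by fun_prop) (by fun_prop), integral_add (by fun_prop) (by fun_prop),
    integral_const_mul, integral_const_mul]
  rfl

lemma I_two_eq_tripleDdfact (n m l : ℕ) :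
    I n m l 2 = tripleDdfact n m (l + 2) + 4 * l * tripleDdfact n m l
      + 4 * l * (l - 1) * tripleDdfact n m (l - 2) := by
  have hsqrt : Real.sqrt (2 / π) * Real.sqrt (π / 2) = 1 := by
    rw [← Real.sqrt_mul (by positivity), div_mul_div_comm, mul_comm 2 π,
      div_self (by positivity), Real.sqrt_one]
  have hcast : (4 * l * (l - 1) * tripleDdfact n m (l - 2 : ℕ) : ℝ)
      = 4 * l * (l - 1) * tripleDdfact n m (l - 2) := by
    rcases l with _ | _ | l <;> simp [show ∀ k : ℤ, k + 1 + 1 - 2 = k by intro; ring]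
  rw [I_two_eq, tripleIntegral_eq, tripleIntegral_eq, tripleIntegral_eq, ← hcast]
  push_cast
  linear_combination (tripleDdfact n m (l + 2) + 4 * l * tripleDdfact n m l
      + 4 * l * (l - 1) * tripleDdfact n m (l - 2 : ℕ)) * hsqrt

lemma tripleDdfact_two_linearization {a b c : ℤ} (h : Even (a + b + c)) :
    tripleDdfact a b (c + 2) + 4 * c * tripleDdfact a b c
      + 4 * c * (c - 1) * tripleDdfact a b (c - 2)
    = ddfact (a + b - c - 3) * ddfact (a - b + c - 3) * ddfact (-a + b + c - 3) *
        (((a : ℝ) ^ 2 + (b : ℝ) ^ 2 + (c : ℝ) ^ 2 - 2 * a * b - 2 * a * c - 2 * b * c - 1) ^ 2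
          - 16 * a * b * c) := by
  have hp := ddfact_add_two (a := a + b - c - 3) (by grind)
  have hp' := ddfact_add_two (a := a + b - c - 1) (by grind)
  have hq := ddfact_add_two (a := a - b + c - 3) (by grind)
  have hq' := ddfact_add_two (a := a - b + c - 1) (by grind)
  have hr := ddfact_add_two (a := -a + b + c - 3) (by grind)
  have hr' := ddfact_add_two (a := -a + b + c - 1) (by grind)
  simp only [tripleDdfact]
  rw [if_pos (by grind), if_pos h, if_pos (by grind)]
  ring_nf at hp hp' hq hq' hr hr' ⊢
  rw [hp', hq', hr', hp, hq, hr]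
  push_cast
  ring

theorem I4_two_eq (n m l : ℕ) (h : Even (n + m + l))
    (P₁ : ℝ)
    (hP₁ : P₁ = (n : ℝ) ^ 2 + (m : ℝ) ^ 2 + (l : ℝ) ^ 2 - 2 * n * m - 2 * n * l - 2 * m * l) :
    I n m l 2 =
      ddfact ((n : ℤ) + m - l - 3) * ddfact ((n : ℤ) - m + l - 3) *
        ddfact (-(n : ℤ) + m + l - 3) *
        ((P₁ - 1) ^ 2 - 16 * n * m * l) := by
  subst hP₁
  rw [I_two_eq_tripleDdfact]
  exact_mod_cast tripleDdfact_two_linearization (a := n) (b := m) (c := l) (by exact_mod_cast h)
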